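/- arXiv:2411.06956 — 2 statements merged into one kernel-verified Lean document; each statement's English description precedes it below -/
import Mathlib

section
/- Let n ≥ 2 be a natural number and p > 1 a real number. Let S be a symmetric n×n real matrix and c ∈ ℝ. Let e₁ be the first standard basis vector and define the n×n matrix V by V = c·e₁e₁ᵀ + S + (p−2)·(S e₁)e₁ᵀ, i.e. V_{ij} = c·δ_{i1}δ_{j1} + S_{ij} + (p−2)·S_{i1}·δ_{j1}. Let 𝒳 = V − (trace(V)/n)·I be its trace-free part. Then trace(𝒳·𝒳) ≤ trace(𝒳·𝒳ᵀ) ≤ ((p−1)² + 1)/(2(p−1)) · trace(𝒳·𝒳); in particular trace(𝒳·𝒳) ≥ 0. -/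
/-- **Algebraic trace inequality for the trace-free tensor X** (Lemma 3.3):
for `V = c·e₁e₁ᵀ + S + (p−2)·(S e₁)e₁ᵀ` with `S` symmetric and
`X = V − (tr V / n)·I`, one has
`tr(XX) ≤ tr(XX.transpose) ≤ ((p−1)² + 1)/(2(p−1)) · tr(XX)`,
and in particular `tr(XX) ≥ 0`. -/
theorem tracefree_tensor_inequality {n : ℕ} (hn : 2 ≤ n) (p c : ℝ) (hp : 1 < p)
    (S : Matrix (Fin n) (Fin n) ℝ) (hS : S.IsSymm)
    (e₀ : Fin n) (he₀ : e₀ = ⟨0, by omega⟩)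
    (V : Matrix (Fin n) (Fin n) ℝ)
    (hV : ∀ i j, V i j = (if i = e₀ ∧ j = e₀ then c else 0) + S i j +
      (p - 2) * S i e₀ * (if j = e₀ then 1 else 0))
    (X : Matrix (Fin n) (Fin n) ℝ)
    (hX : X = V - (Matrix.trace V / (n : ℝ)) • (1 : Matrix (Fin n) (Fin n) ℝ)) :
    Matrix.trace (X * X) ≤ Matrix.trace (X * X.transpose) ∧
    Matrix.trace (X * X.transpose) ≤ ((p - 1) ^ 2 + 1) / (2 * (p - 1)) * Matrix.trace (X * X) ∧
    0 ≤ Matrix.trace (X * X) := by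
  have hSsym : ∀ i j, S j i = S i j := fun i j => hS.apply i j
  set t : ℝ := Matrix.trace V / (n : ℝ) with ht
  set s : Fin n → ℝ := fun i => S i e₀ with hs
  -- entrywise formula for X
  have hXe : ∀ i j, X i j = (if i = e₀ ∧ j = e₀ then c else 0) + S i j +
      (p - 2) * s i * (if j = e₀ then 1 else 0) - (if i = j then t else 0) := by
    intro i j
    rw [hX]
    simp only [Matrix.sub_apply, Matrix.smul_apply, Matrix.one_apply, hV, hs, smul_eq_mul]
    by_cases h : i = j <;> simp [h]
  set T : ℝ := (∑ i, s i ^ 2) - s e₀ ^ 2 with hTdef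
  have hT : 0 ≤ T := by
    have : s e₀ ^ 2 ≤ ∑ i, s i ^ 2 :=
      Finset.single_le_sum (f := fun i => s i ^ 2) (fun i _ => sq_nonneg _)
        (Finset.mem_univ e₀)
    simpa [hTdef] using sub_nonneg.mpr this
  set W : Matrix (Fin n) (Fin n) ℝ :=
    Matrix.of (fun i j => if i ≠ j ∧ (i = e₀ ∨ j = e₀) then 0 else X i j) with hW
  have hWe : ∀ i j, W i j = if i ≠ j ∧ (i = e₀ ∨ j = e₀) then 0 else X i j := fun i j => rfl
  set D : ℝ := ∑ i, ∑ j, W i j * W j i with hDdef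
  have hWsymm : ∀ i j, W j i = W i j := by
    intro i j
    have h2 := hSsym i j
    rcases eq_or_ne i j with hij | hij
    · subst hij; simp [hWe, hXe, hs]
    · rcases eq_or_ne i e₀ with hi | hi
      · rcases eq_or_ne j e₀ with hj | hj
        · exact absurd (hi.trans hj.symm) hij
        · subst hi
          simp [hWe, hXe, hs, hij, hij.symm, hj, Ne.symm hj, h2]
          try ring
      · rcases eq_or_ne j e₀ with hj | hj
        · subst hj
          simp [hWe, hXe, hs, hij, hij.symm, hi, Ne.symm hi, h2]
          try ring
        · simp [hWe, hXe, hs, hij, hij.symm, hi, Ne.symm hi, hj, Ne.symm hj, h2]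
          try ring
  have hD : 0 ≤ D := by
    rw [hDdef]
    apply Finset.sum_nonneg
    intro i _
    apply Finset.sum_nonneg
    intro j _
    rw [hWsymm]
    exact mul_self_nonneg _
  -- trace formulas
  have htr1 : Matrix.trace (X * X) = ∑ i, ∑ j, X i j * X j i := by
    simp [Matrix.trace, Matrix.mul_apply, Matrix.diag]
  have htr2 : Matrix.trace (X * X.transpose) = ∑ i, ∑ j, X i j * X i j := by
    simp [Matrix.trace, Matrix.mul_apply, Matrix.diag, Matrix.transpose_apply]
  -- delta sums
  have hsum1 : ∑ i, ∑ j, (if j = e₀ ∧ i ≠ e₀ then s i ^ 2 else (0:ℝ)) = T := by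
    have h1 : ∀ i : Fin n, ∑ j, (if j = e₀ ∧ i ≠ e₀ then s i ^ 2 else (0:ℝ))
        = if i = e₀ then 0 else s i ^ 2 := by
      intro i
      by_cases hi : i = e₀ <;> simp [hi, Finset.sum_ite_eq']
    rw [Finset.sum_congr rfl (fun i _ => h1 i)]
    have : ∀ i : Fin n, (if i = e₀ then (0:ℝ) else s i ^ 2)
        = s i ^ 2 - (if i = e₀ then s i ^ 2 else 0) := by
      intro i; by_cases hi : i = e₀ <;> simp [hi]
    rw [Finset.sum_congr rfl (fun i _ => this i), Finset.sum_sub_distrib]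
    simp [Finset.sum_ite_eq', hTdef]
  have hsum2 : ∑ i, ∑ j, (if i = e₀ ∧ j ≠ e₀ then s j ^ 2 else (0:ℝ)) = T := by
    rw [Finset.sum_comm]
    calc ∑ j, ∑ i, (if i = e₀ ∧ j ≠ e₀ then s j ^ 2 else (0:ℝ))
        = ∑ j, ∑ i, (if i = e₀ ∧ j ≠ e₀ then s j ^ 2 else (0:ℝ)) := rfl
      _ = T := by
          have h1 : ∀ j : Fin n, ∑ i, (if i = e₀ ∧ j ≠ e₀ then s j ^ 2 else (0:ℝ))
              = if j = e₀ then 0 else s j ^ 2 := by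
            intro j
            by_cases hj : j = e₀ <;> simp [hj, Finset.sum_ite_eq']
          rw [Finset.sum_congr rfl (fun j _ => h1 j)]
          have : ∀ j : Fin n, (if j = e₀ then (0:ℝ) else s j ^ 2)
              = s j ^ 2 - (if j = e₀ then s j ^ 2 else 0) := by
            intro j; by_cases hj : j = e₀ <;> simp [hj]
          rw [Finset.sum_congr rfl (fun j _ => this j), Finset.sum_sub_distrib]
          simp [Finset.sum_ite_eq', hTdef]
  -- pointwise identities
  have key1 : ∀ i j, X i j * X j i = W i j * W j i +
      ((p - 1) * (if j = e₀ ∧ i ≠ e₀ then s i ^ 2 else 0) +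
       (p - 1) * (if i = e₀ ∧ j ≠ e₀ then s j ^ 2 else 0)) := by
    intro i j
    have h2 := hSsym i j
    rcases eq_or_ne i j with hij | hij
    · subst hij; simp [hWe, hXe, hs]
    · rcases eq_or_ne i e₀ with hi | hi
      · rcases eq_or_ne j e₀ with hj | hj
        · exact absurd (hi.trans hj.symm) hij
        · subst hi
          simp [hWe, hXe, hs, hij, hij.symm, hj, Ne.symm hj, h2]
          try ring
      · rcases eq_or_ne j e₀ with hj | hj
        · subst hj
          simp [hWe, hXe, hs, hij, hij.symm, hi, Ne.symm hi, h2]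
          try ring
        · simp [hWe, hXe, hs, hij, hij.symm, hi, Ne.symm hi, hj, Ne.symm hj, h2]
          try ring
  have key2 : ∀ i j, X i j * X i j = X i j * X j i +
      ((p - 2) * (p - 1) * (if j = e₀ ∧ i ≠ e₀ then s i ^ 2 else 0) -
       (p - 2) * (if i = e₀ ∧ j ≠ e₀ then s j ^ 2 else 0)) := by
    intro i j
    have h2 := hSsym i j
    rcases eq_or_ne i j with hij | hij
    · subst hij; simp [hWe, hXe, hs]
    · rcases eq_or_ne i e₀ with hi | hi
      · rcases eq_or_ne j e₀ with hj | hj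
        · exact absurd (hi.trans hj.symm) hij
        · subst hi
          simp [hWe, hXe, hs, hij, hij.symm, hj, Ne.symm hj, h2]
          try ring
      · rcases eq_or_ne j e₀ with hj | hj
        · subst hj
          simp [hWe, hXe, hs, hij, hij.symm, hi, Ne.symm hi, h2]
          try ring
        · simp [hWe, hXe, hs, hij, hij.symm, hi, Ne.symm hi, hj, Ne.symm hj, h2]
          try ring
  -- summed identities
  have hXX : Matrix.trace (X * X) = D + 2 * (p - 1) * T := by
    rw [htr1,
      Finset.sum_congr rfl fun i _ => Finset.sum_congr rfl fun j _ => key1 i j]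
    simp only [Finset.sum_add_distrib, ← Finset.mul_sum]
    rw [hsum1, hsum2, ← hDdef]
    ring
  have hXXt : Matrix.trace (X * X.transpose) = Matrix.trace (X * X) + (p - 2) ^ 2 * T := by
    rw [htr2, htr1,
      Finset.sum_congr rfl fun i _ => Finset.sum_congr rfl fun j _ => key2 i j]
    simp only [Finset.sum_add_distrib, Finset.sum_sub_distrib, ← Finset.mul_sum]
    rw [hsum1, hsum2]
    ring
  -- conclude
  have hp1 : 0 < p - 1 := by linarith
  refine ⟨by nlinarith [sq_nonneg (p-2)], ?_, by nlinarith⟩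
  rw [div_mul_eq_mul_div, le_div_iff₀ (by linarith : (0:ℝ) < 2 * (p - 1))]
  nlinarith [sq_nonneg (p - 2), mul_nonneg hD (sq_nonneg (p - 2)), mul_nonneg hT (sq_nonneg (p-2))]
end

section
/- Let n ≥ 2 be a natural number, p > 1 and w₁ > 0 real numbers, and let S be a symmetric n×n real matrix. Set D = w₁^{p−2}·(trace(S) + (p−2)·S₁₁). Then (p−1)²·w₁^{2p−4}·S₁₁² + 2(p−1)·w₁^{2p−4}·∑_{j=2}^{n} S_{1j}² + w₁^{2p−4}·∑_{i,j=2}^{n} S_{ij}² ≥ (1/(n−1))·D² − (2(p−1)/(n−1))·w₁^{p−2}·S₁₁·D + (n(p−1)/(n−1))·w₁^{2p−4}·((p−1)·S₁₁² + ∑_{j=2}^{n} S_{1j}²). -/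
/-!
With `W = w₁^{p-2}`, `a = S₁₁`, `t = ∑_{i≥2} S_{ii}`, `T = ∑_{j≥2} S_{1j}²` and
`Q = ∑_{i,j≥2} S_{ij}²`, one has `D = W((p-1)a + t)`, and the difference of the two sides is
`W²(Q - t²/(n-1)) + W²(p-1)T(n-2)/(n-1)`. The first term is nonnegative by Cauchy–Schwarz on the
diagonal of the lower `(n-1)×(n-1)` block, the second because `p ≥ 1` and `n ≥ 2`.
-/

open Finset

theorem Matrix.sq_sum_diag_le_card_mul_sum_sq {ι R : Type*} [Semiring R] [LinearOrder R]
    [IsStrictOrderedRing R] [ExistsAddOfLE R] (A : Matrix ι ι R) (s : Finset ι) :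
    (∑ i ∈ s, A i i) ^ 2 ≤ #s * ∑ i ∈ s, ∑ j ∈ s, A i j ^ 2 :=
  sq_sum_le_card_mul_sum_sq.trans <| by
    gcongr with i hi
    exact single_le_sum (fun j _ => sq_nonneg (A i j)) hi

section RefinedKato

variable (N p W a t T Q : ℝ)

theorem refined_kato_gap_eq (hN : N ≠ 1) :
    ((p - 1) ^ 2 * (W ^ 2 * a ^ 2) + 2 * (p - 1) * (W ^ 2 * T) + W ^ 2 * Q) -
      (1 / (N - 1) * (W * ((p - 1) * a + t)) ^ 2 -
        2 * (p - 1) / (N - 1) * (W * a * (W * ((p - 1) * a + t))) +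
        N * (p - 1) / (N - 1) * (W ^ 2 * ((p - 1) * a ^ 2 + T))) =
      W ^ 2 * (Q - t ^ 2 / (N - 1)) + (N - 2) / (N - 1) * (p - 1) * W ^ 2 * T := by
  have : N - 1 ≠ 0 := sub_ne_zero.mpr hN
  field_simp
  ring

variable {N p W a t T Q}

theorem refined_kato_of_sq_le (hN : 2 ≤ N) (hp : 1 ≤ p) (hT : 0 ≤ T)
    (htQ : t ^ 2 ≤ (N - 1) * Q) :
    1 / (N - 1) * (W * ((p - 1) * a + t)) ^ 2 -
        2 * (p - 1) / (N - 1) * (W * a * (W * ((p - 1) * a + t))) +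
        N * (p - 1) / (N - 1) * (W ^ 2 * ((p - 1) * a ^ 2 + T)) ≤
      (p - 1) ^ 2 * (W ^ 2 * a ^ 2) + 2 * (p - 1) * (W ^ 2 * T) + W ^ 2 * Q := by
  have hN1 : 0 < N - 1 := by linarith
  rw [← sub_nonneg, refined_kato_gap_eq N p W a t T Q (by linarith)]
  have hQ : 0 ≤ Q - t ^ 2 / (N - 1) := sub_nonneg.mpr <| (div_le_iff₀' hN1).mpr htQ
  have hN2 : 0 ≤ N - 2 := by linarith
  have hp1 : 0 ≤ p - 1 := by linarith
  positivity

end RefinedKato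

/-- **Refined Kato-type algebraic inequality** (from the proof of Lemma 4.1):
for a symmetric matrix `S` (the Hessian of `w` in an orthonormal frame whose first
vector is `∇w/|∇w|`), `w₁ = |∇w| > 0` and
`D = w₁^{p−2}(tr S + (p−2) S₁₁)` (the `p`-Laplacian), one has
`(p−1)² w₁^{2p−4} S₁₁² + 2(p−1) w₁^{2p−4} ∑_{j≥2} S_{1j}² + w₁^{2p−4} ∑_{i,j≥2} S_{ij}²
  ≥ D²/(n−1) − (2(p−1)/(n−1)) w₁^{p−2} S₁₁ D
    + (n(p−1)/(n−1)) w₁^{2p−4} ((p−1) S₁₁² + ∑_{j≥2} S_{1j}²)`. -/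
theorem refined_kato_inequality {n : ℕ} (hn : 2 ≤ n) (p w₁ : ℝ) (hp : 1 < p)
    (hw : 0 < w₁)
    (S : Matrix (Fin n) (Fin n) ℝ)
    (e₀ : Fin n)
    (D : ℝ) (hD : D = w₁ ^ (p - 2) * (Matrix.trace S + (p - 2) * S e₀ e₀)) :
    1 / ((n : ℝ) - 1) * D ^ 2 -
        2 * (p - 1) / ((n : ℝ) - 1) * (w₁ ^ (p - 2) * S e₀ e₀ * D) +
        (n : ℝ) * (p - 1) / ((n : ℝ) - 1) * (w₁ ^ (2 * p - 4) *
          ((p - 1) * S e₀ e₀ ^ 2 + ∑ j ∈ Finset.univ.filter (· ≠ e₀), S e₀ j ^ 2)) ≤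
      (p - 1) ^ 2 * (w₁ ^ (2 * p - 4) * S e₀ e₀ ^ 2) +
        2 * (p - 1) * (w₁ ^ (2 * p - 4) *
          ∑ j ∈ Finset.univ.filter (· ≠ e₀), S e₀ j ^ 2) +
        w₁ ^ (2 * p - 4) *
          ∑ i ∈ Finset.univ.filter (· ≠ e₀),
            ∑ j ∈ Finset.univ.filter (· ≠ e₀), S i j ^ 2 := by
  have hs : univ.filter (· ≠ e₀) = univ.erase e₀ := filter_ne' _ _
  have hcard : (#(univ.filter (· ≠ e₀)) : ℝ) = n - 1 := by
    rw [hs, card_erase_of_mem (mem_univ _), card_univ, Fintype.card_fin,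
      Nat.cast_sub (by omega), Nat.cast_one]
  have htrace : S.trace = S e₀ e₀ + ∑ i ∈ univ.filter (· ≠ e₀), S i i := by
    rw [hs]
    exact (add_sum_erase _ S.diag (mem_univ e₀)).symm
  have hW : w₁ ^ (2 * p - 4) = (w₁ ^ (p - 2)) ^ 2 := by
    rw [← Real.rpow_mul_natCast hw.le]
    ring_nf
  have hD' : D = w₁ ^ (p - 2) * ((p - 1) * S e₀ e₀ + ∑ i ∈ univ.filter (· ≠ e₀), S i i) := by
    rw [hD, htrace]
    ring
  rw [hD', hW]
  exact refined_kato_of_sq_le (by exact_mod_cast hn) hp.le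
    (sum_nonneg fun j _ => sq_nonneg (S e₀ j))
    (hcard ▸ S.sq_sum_diag_le_card_mul_sum_sq _)
end
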